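/- A graph G on vertices v_1, ..., v_n is a cograph if and only if it admits a twin ordering, i.e., an ordering of its vertices such that for every j ≥ 2, the vertex v_j has a twin in the subgraph induced by {v_1, ..., v_j}. -/

import Mathlib

open SimpleGraph

def IsCograph {V : Type*} (G : SimpleGraph V) : Prop :=
  IsEmpty (SimpleGraph.pathGraph 4 ↪g G)

def AreTwins {V : Type*} (G : SimpleGraph V) (u v : V) : Prop :=
  u ≠ v ∧ (G.neighborSet u = G.neighborSet v ∨
    insert u (G.neighborSet u) = insert v (G.neighborSet v))

def DistHereditary {V : Type*} (G : SimpleGraph V) : Prop :=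
  ∀ s : Set V, (G.induce s).Connected →
    ∀ u v : s, (G.induce s).dist u v = G.dist u v

/-! A cograph on at least two vertices has twins: by Seinsche's theorem `G` or `Gᶜ` is
disconnected, complementation preserves twins, and twins inside a component containing an edge
remain twins in the whole graph. Deleting one of the twins and recursing yields a twin ordering.
Conversely, `P₄` has no twins, so an induced `P₄` through `v_j` can be moved onto the twin of `v_j`
inside `{v_1, …, v_{j-1}}`; descending on `j` leaves no room for an induced `P₄`. -/

section

variable {V W : Type*} {G : SimpleGraph V}

theorem areTwins_iff {u v : V} :
    AreTwins G u v ↔ u ≠ v ∧ ∀ w, w ≠ u → w ≠ v → (G.Adj u w ↔ G.Adj v w) := by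
  refine and_congr_right fun huv => ⟨?_, fun h => ?_⟩
  · rintro (h | h) w hwu hwv
    · rw [← mem_neighborSet, h, mem_neighborSet]
    · simpa [hwu, hwv] using Set.ext_iff.mp h w
  · have hsymm : G.Adj v u ↔ G.Adj u v := G.adj_comm v u
    by_cases hadj : G.Adj u v
    · right
      ext w
      by_cases hwu : w = u <;> by_cases hwv : w = v <;> simp [*]
    · left
      ext w
      by_cases hwu : w = u <;> by_cases hwv : w = v <;> simp [*]

theorem areTwins_induce_iff {s : Set V} {u v : s} :
    AreTwins (G.induce s) u v ↔
      (u : V) ≠ v ∧ ∀ w ∈ s, w ≠ u → w ≠ v → (G.Adj u w ↔ G.Adj v w) := by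
  simp only [areTwins_iff, ne_eq, Subtype.forall, Subtype.ext_iff, induce_adj]

theorem AreTwins.compl {u v : V} (h : AreTwins G u v) : AreTwins Gᶜ u v := by
  rw [areTwins_iff] at h ⊢
  refine ⟨h.1, fun w hwu hwv => ?_⟩
  simp only [compl_adj, h.2 w hwu hwv, Ne.symm hwu, Ne.symm hwv, ne_eq, not_false_eq_true,
    true_and]

theorem AreTwins.of_induce {s : Set V} {u v : s} (h : AreTwins (G.induce s) u v)
    (hout : ∀ w ∉ s, G.Adj u w ↔ G.Adj v w) : AreTwins G u v := by
  rw [areTwins_induce_iff] at h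
  refine areTwins_iff.mpr ⟨h.1, fun w hwu hwv => ?_⟩
  by_cases hw : w ∈ s
  · exact h.2 w hw hwu hwv
  · exact hout w hw

theorem pathGraph_four_not_areTwins (i j : Fin 4) : ¬AreTwins (pathGraph 4) i j := by
  rw [areTwins_iff]
  simp only [pathGraph_adj]
  revert i j
  decide

theorem IsCograph.induce (hG : IsCograph G) (s : Set V) : IsCograph (G.induce s) :=
  ⟨fun f => hG.false ((Embedding.induce s).comp f)⟩

-- `P₄` is self-complementary: `2 - 0 - 3 - 1` is an induced path in its complement.
theorem pathGraph_four_adj_iff_compl (i j : Fin 4) :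
    (pathGraph 4).Adj i j ↔ i ≠ j ∧ ¬(pathGraph 4).Adj (![2, 0, 3, 1] i) (![2, 0, 3, 1] j) := by
  simp only [pathGraph_adj]
  revert i j
  decide

theorem IsCograph.compl (hG : IsCograph G) : IsCograph Gᶜ := by
  have hσ : Function.Injective (![2, 0, 3, 1] : Fin 4 → Fin 4) := by decide
  refine ⟨fun f => hG.false ⟨⟨f ∘ ![2, 0, 3, 1], f.injective.comp hσ⟩, fun {i j} => ?_⟩⟩
  rcases eq_or_ne i j with rfl | hij
  · simp
  · simp only [Function.Embedding.coeFn_mk, Function.comp_apply,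
      pathGraph_four_adj_iff_compl i j, ← f.map_rel_iff, compl_adj, f.injective.ne_iff]
    have := hσ.ne hij
    tauto

theorem not_isCograph_of_induced_path {a b c d : V} (hab : G.Adj a b) (hbc : G.Adj b c)
    (hcd : G.Adj c d) (hac : ¬G.Adj a c) (had : ¬G.Adj a d) (hbd : ¬G.Adj b d) :
    ¬IsCograph G := by
  have hinj : Function.Injective ![a, b, c, d] := by
    intro i j hij
    fin_cases i <;> fin_cases j <;> simp_all [G.adj_comm]
  refine fun hG => hG.false ⟨⟨![a, b, c, d], hinj⟩, fun {i j} => ?_⟩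
  fin_cases i <;> fin_cases j <;> simp [pathGraph_adj, *, G.adj_comm]

theorem SimpleGraph.compl_induce (s : Set V) : (G.induce s)ᶜ = Gᶜ.induce s := by
  ext a b
  simp [Subtype.ext_iff]

theorem IsCograph.connected_induce_compl_singleton (hG : IsCograph G) (hconn : G.Connected)
    {v x : V} (hxv : x ≠ v) (hvx : ¬G.Adj v x) : (G.induce {v}ᶜ).Connected := by
  obtain ⟨⟨⟨y, x'⟩, hyx'⟩, -, hy, hx'⟩ := (hconn.preconnected v x).some.exists_boundary_dart
    {w | w = v ∨ G.Adj v w} (Or.inl rfl) (by simp [hxv, hvx])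
  -- an edge `y x'` leaving the closed neighbourhood of `v`
  simp only [Set.mem_ofPred_eq, not_or] at hy hx'
  obtain ⟨hx'v, hvx'⟩ := hx'
  have hvy : G.Adj v y := hy.resolve_left fun h => hvx' (h ▸ hyx')
  have hyv : y ∈ ({v}ᶜ : Set V) := hvy.ne'
  have hstep : ∀ {a b : V} (ha : a ∈ ({v}ᶜ : Set V)) (hb : b ∈ ({v}ᶜ : Set V)),
      G.Adj a b → (G.induce {v}ᶜ).Reachable ⟨a, ha⟩ ⟨b, hb⟩ := fun _ _ h => Adj.reachable h
  have hreach : ∀ t : ({v}ᶜ : Set V), (G.induce {v}ᶜ).Reachable ⟨y, hyv⟩ t := by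
    intro t
    by_contra ht
    -- the walk from `t` to `v` enters `v` from a vertex `z` outside the component of `y`
    obtain ⟨⟨⟨z, v'⟩, hzv'⟩, -, ⟨hzv, hz⟩, hv'⟩ := (hconn.preconnected t v).some.exists_boundary_dart
      {w | ∃ hw : w ∈ ({v}ᶜ : Set V), ¬(G.induce {v}ᶜ).Reachable ⟨y, hyv⟩ ⟨w, hw⟩}
      ⟨t.2, ht⟩ (by simp)
    have hv'v : v' = v := by
      by_contra hv'v
      simp only [Set.mem_ofPred_eq, not_exists, not_not] at hv'
      exact hz ((hv' hv'v).trans (hstep hv'v hzv hzv'.symm))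
    rw [hv'v] at hzv'
    have hyz : ¬G.Adj y z := fun h => hz (hstep hyv hzv h)
    have hx'z : ¬G.Adj x' z := fun h => hz ((hstep hyv hx'v hyx').trans (hstep hx'v hzv h))
    exact not_isCograph_of_induced_path hyx'.symm hvy.symm hzv'.symm
      (fun h => hvx' h.symm) hx'z hyz hG
  exact (connected_iff _).mpr ⟨fun a b => (hreach a).symm.trans (hreach b), ⟨⟨y, hyv⟩⟩⟩

theorem IsCograph.not_connected_or_not_connected_compl [Finite V] [Nontrivial V]
    (hG : IsCograph G) : ¬G.Connected ∨ ¬Gᶜ.Connected := by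
  induction h : Nat.card V using Nat.strong_induction_on generalizing V with
  | _ n ih =>
  rw [← not_and_or]
  rintro ⟨hc, hcc⟩
  obtain ⟨v⟩ := (inferInstance : Nonempty V)
  obtain ⟨x, hvx⟩ := hcc.preconnected.exists_adj_of_nontrivial v
  obtain ⟨y, hvy⟩ := hc.preconnected.exists_adj_of_nontrivial v
  rw [compl_adj] at hvx
  have : Nontrivial ({v}ᶜ : Set V) :=
    ⟨⟨x, hvx.1.symm⟩, ⟨y, hvy.ne'⟩, fun hxy => hvx.2 (by rwa [Subtype.mk.inj hxy])⟩
  have hlt : Nat.card ({v}ᶜ : Set V) < n :=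
    h ▸ Finite.card_subtype_lt (p := (· ∈ ({v}ᶜ : Set V))) (x := v) (by simp)
  rcases ih _ hlt (hG.induce {v}ᶜ) rfl with hsub | hsub
  · exact hsub (hG.connected_induce_compl_singleton hc hvx.1.symm hvx.2)
  · rw [compl_induce] at hsub
    exact hsub (hG.compl.connected_induce_compl_singleton hcc hvy.ne' (by simp [hvy]))

theorem IsCograph.exists_areTwins [Finite V] [Nontrivial V] (hG : IsCograph G) :
    ∃ u v, AreTwins G u v := by
  induction h : Nat.card V using Nat.strong_induction_on generalizing V with
  | _ n ih =>
  have hdisconn : ∀ H : SimpleGraph V, IsCograph H → ¬H.Connected → ∃ u v, AreTwins H u v := by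
    intro H hH hHc
    by_cases hedge : ∃ a b, H.Adj a b
    · obtain ⟨a, b, hab⟩ := hedge
      obtain ⟨q, hq⟩ : ∃ q, ¬H.Reachable a q := by
        by_contra! hall
        exact hHc ((connected_iff _).mpr ⟨fun p q => (hall p).symm.trans (hall q), ⟨a⟩⟩)
      let C : Set V := {w | H.Reachable a w}
      have : Nontrivial C :=
        ⟨⟨a, Reachable.refl a⟩, ⟨b, hab.reachable⟩, fun h => hab.ne (congrArg Subtype.val h)⟩
      obtain ⟨u, v, huv⟩ :=
        ih _ (h ▸ Finite.card_subtype_lt (p := (· ∈ C)) hq) (hH.induce C) rfl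
      have hout : ∀ c : C, ∀ w ∉ C, ¬H.Adj c w := fun c _ hw hcw => hw (c.2.trans hcw.reachable)
      exact ⟨u, v, huv.of_induce fun w hw => iff_of_false (hout u w hw) (hout v w hw)⟩
    · simp only [not_exists] at hedge
      obtain ⟨a, b, hab⟩ := exists_pair_ne V
      exact ⟨a, b, areTwins_iff.mpr ⟨hab, fun w _ _ => iff_of_false (hedge a w) (hedge b w)⟩⟩
  rcases hG.not_connected_or_not_connected_compl with hc | hc
  · exact hdisconn G hG hc
  · obtain ⟨u, v, huv⟩ := hdisconn Gᶜ hG.compl hc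
    exact ⟨u, v, compl_compl G ▸ huv.compl⟩

-- `v_j` has a twin in `G[v_0, …, v_j]`, unfolded via `areTwins_iff` (indices start at `0`).
def IsTwinOrdering {n : ℕ} (G : SimpleGraph V) (e : Fin n ≃ V) : Prop :=
  ∀ j : Fin n, 0 < (j : ℕ) →
    ∃ u, e.symm u < j ∧ ∀ w, e.symm w < j → w ≠ u → (G.Adj u w ↔ G.Adj (e j) w)

theorem isTwinOrdering_iff_areTwins {n : ℕ} {e : Fin n ≃ V} :
    IsTwinOrdering G e ↔ ∀ j : Fin n, 0 < (j : ℕ) →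
      ∃ u : {x : V | ∃ k, k ≤ j ∧ e k = x},
        AreTwins (G.induce {x : V | ∃ k, k ≤ j ∧ e k = x}) u ⟨e j, ⟨j, le_refl j, rfl⟩⟩ := by
  refine forall₂_congr fun j _ => ?_
  have hmem : ∀ x, x ∈ {x : V | ∃ k, k ≤ j ∧ e k = x} ↔ e.symm x ≤ j := fun x =>
    ⟨by rintro ⟨k, hk, rfl⟩; simpa using hk, fun h => ⟨_, h, e.apply_symm_apply x⟩⟩
  have hlt : ∀ w, e.symm w < j ↔ e.symm w ≤ j ∧ w ≠ e j := fun w => by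
    rw [lt_iff_le_and_ne, ne_eq, e.symm_apply_eq]
  simp only [areTwins_induce_iff, Subtype.exists, hmem, hlt, exists_prop, and_imp, and_assoc]
  exact exists_congr fun u => and_congr_right' <| and_congr_right' <|
    forall_congr' fun w => forall_congr' fun _ => forall_comm

theorem exists_embedding_off_twin {F : SimpleGraph W} (hF : ∀ i j, ¬AreTwins F i j)
    (f : F ↪g G) {u v : V} (huv : u ≠ v)
    (hagree : ∀ w ∈ Set.range f, w ≠ u → w ≠ v → (G.Adj u w ↔ G.Adj v w)) :
    ∃ f' : F ↪g G, Set.range f' ⊆ insert u (Set.range f \ {v}) := by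
  classical
  -- `F` has no twins, so `u ∉ range f`, and swapping `u` with `v` preserves adjacency on `range f`
  by_cases hv : v ∈ Set.range f
  swap
  · exact ⟨f, fun w hw => Or.inr ⟨hw, fun h => hv (h ▸ hw)⟩⟩
  obtain ⟨i, rfl⟩ := hv
  have hu : ∀ k, f k ≠ u := by
    rintro i' rfl
    refine hF i' i (areTwins_iff.mpr ⟨fun h => huv (congrArg f h), fun k hki' hki => ?_⟩)
    rw [← f.map_rel_iff, ← f.map_rel_iff]
    exact hagree _ ⟨k, rfl⟩ (f.injective.ne hki') (f.injective.ne hki)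
  have hσ : ∀ k, Equiv.swap u (f i) (f k) = if k = i then u else f k := by
    intro k
    split_ifs with hk
    · rw [hk, Equiv.swap_apply_right]
    · exact Equiv.swap_apply_of_ne_of_ne (hu k) (f.injective.ne hk)
  refine ⟨⟨⟨Equiv.swap u (f i) ∘ f, (Equiv.injective _).comp f.injective⟩, fun {a b} => ?_⟩, ?_⟩
  · simp only [Function.Embedding.coeFn_mk, Function.comp_apply, hσ, ← f.map_rel_iff]
    split_ifs with ha hb hb
    · subst ha hb; simp
    · subst ha; exact hagree _ ⟨b, rfl⟩ (hu b) (f.injective.ne hb)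
    · subst hb; rw [G.adj_comm, G.adj_comm (f a)]
      exact hagree _ ⟨a, rfl⟩ (hu a) (f.injective.ne ha)
    · rfl
  · rintro _ ⟨k, rfl⟩
    change Equiv.swap u (f i) (f k) ∈ _
    rw [hσ]
    split_ifs with hk
    · exact Set.mem_insert u _
    · exact Or.inr ⟨⟨k, rfl⟩, f.injective.ne hk⟩

theorem IsTwinOrdering.isCograph {n : ℕ} {e : Fin n ≃ V} (he : IsTwinOrdering G e) :
    IsCograph G := by
  suffices h : ∀ (m : ℕ) (f : pathGraph 4 ↪g G), (∀ i, (e.symm (f i) : ℕ) ≤ m) → False from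
    ⟨fun f => h n f fun i => (e.symm (f i)).2.le⟩
  intro m
  induction m with
  | zero =>
    intro f hf
    have h01 : e.symm (f 0) = e.symm (f 1) := Fin.ext (by have := hf 0; have := hf 1; omega)
    exact absurd (f.injective (e.symm.injective h01)) (by decide)
  | succ m ih =>
    intro f hf
    by_cases htop : ∃ i, (e.symm (f i) : ℕ) = m + 1
    swap
    · rw [not_exists] at htop
      exact ih f fun i => Nat.le_of_lt_succ ((hf i).lt_of_ne (htop i))
    obtain ⟨i, hi⟩ := htop
    have hbelow : ∀ w ∈ Set.range f, w ≠ f i → (e.symm w : ℕ) ≤ m := by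
      rintro _ ⟨k, rfl⟩ hk
      have : (e.symm (f k) : ℕ) ≠ m + 1 := fun h =>
        hk (e.symm.injective (Fin.ext (h.trans hi.symm)))
      exact Nat.le_of_lt_succ ((hf k).lt_of_ne this)
    obtain ⟨u, hu, hagree⟩ := he (e.symm (f i)) (by omega)
    rw [e.apply_symm_apply] at hagree
    have huv : u ≠ f i := by rintro rfl; exact lt_irrefl _ hu
    obtain ⟨f', hf'⟩ := exists_embedding_off_twin pathGraph_four_not_areTwins f huv
      fun w hw hwu hwv => hagree w (Fin.lt_def.mpr (by have := hbelow w hw hwv; omega)) hwu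
    refine ih f' fun k => ?_
    rcases hf' ⟨k, rfl⟩ with hk | ⟨hk, hki⟩
    · rw [hk]; have := Fin.lt_def.mp hu; omega
    · exact hbelow _ hk hki

theorem IsTwinOrdering.exists_extend {n : ℕ} {u v : V} {e' : Fin n ≃ ({v}ᶜ : Set V)}
    (he' : IsTwinOrdering (G.induce {v}ᶜ) e') (huv : AreTwins G u v) :
    ∃ e : Fin (n + 1) ≃ V, IsTwinOrdering G e := by
  classical
  let e : Fin (n + 1) ≃ V :=
    finSuccEquivLast.trans ((Equiv.optionCongr e').trans (Equiv.optionSubtypeNe v))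
  have he_castSucc : ∀ k, e k.castSucc = e' k := fun k => by simp [e]; rfl
  have he_last : e (Fin.last n) = v := by simp [e]; rfl
  have he_symm : ∀ w (hw : w ≠ v), e.symm w = (e'.symm ⟨w, hw⟩).castSucc := fun w hw =>
    e.symm_apply_eq.mpr (by simp [he_castSucc])
  have he_symm_v : e.symm v = Fin.last n := e.symm_apply_eq.mpr he_last.symm
  have hne_of_lt : ∀ w j, e.symm w < Fin.castSucc j → w ≠ v := by
    rintro w j hw rfl
    exact (Fin.castSucc_lt_last j).not_gt (he_symm_v ▸ hw)
  refine ⟨e, fun j hj => ?_⟩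
  induction j using Fin.lastCases with
  | last =>
    refine ⟨u, he_symm u huv.1 ▸ Fin.castSucc_lt_last _, fun w hw hwu => ?_⟩
    have hwv : w ≠ v := by
      rintro rfl
      exact lt_irrefl _ (he_symm_v ▸ hw)
    rw [he_last]
    exact (areTwins_iff.mp huv).2 w hwu hwv
  | cast k =>
    obtain ⟨u', hu', hagree⟩ := he' k hj
    refine ⟨u', by rwa [he_symm u' u'.2, Fin.castSucc_lt_castSucc_iff], fun w hw hwu => ?_⟩
    have hwv := hne_of_lt w k hw
    rw [he_symm w hwv, Fin.castSucc_lt_castSucc_iff] at hw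
    rw [he_castSucc]
    exact hagree ⟨w, hwv⟩ hw fun h => hwu (congrArg Subtype.val h)

theorem IsCograph.exists_isTwinOrdering [Finite V] (hG : IsCograph G) :
    ∃ e : Fin (Nat.card V) ≃ V, IsTwinOrdering G e := by
  induction h : Nat.card V generalizing V with
  | zero => exact ⟨(Finite.equivFinOfCardEq h).symm, fun j => j.elim0⟩
  | succ n ih =>
    rcases subsingleton_or_nontrivial V with hV | hV
    · have hn : n = 0 := by have := Finite.card_le_one_iff_subsingleton.mpr hV; omega
      subst hn
      exact ⟨(Finite.equivFinOfCardEq h).symm, fun j hj => absurd j.2 (by omega)⟩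
    obtain ⟨u, v, huv⟩ := hG.exists_areTwins
    have hcard : Nat.card ({v}ᶜ : Set V) = n := by
      classical
      have := Nat.card_congr (Equiv.optionSubtypeNe v : Option ({v}ᶜ : Set V) ≃ V)
      rw [Finite.card_option] at this
      exact Nat.succ_injective (this.trans h)
    obtain ⟨e', he'⟩ := ih (hG.induce {v}ᶜ) hcard
    exact he'.exists_extend huv

end

theorem stmt3 {V : Type*} [Fintype V] (G : SimpleGraph V) :
    IsCograph G ↔
      ∃ e : Fin (Fintype.card V) ≃ V,
        ∀ j : Fin (Fintype.card V), 0 < (j : ℕ) →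
          ∃ u : {x : V | ∃ k, k ≤ j ∧ e k = x},
            AreTwins (G.induce {x : V | ∃ k, k ≤ j ∧ e k = x}) u
              ⟨e j, ⟨j, le_refl j, rfl⟩⟩ := by
  simp only [← isTwinOrdering_iff_areTwins]
  exact ⟨fun hG => Nat.card_eq_fintype_card (α := V) ▸ hG.exists_isTwinOrdering,
    fun ⟨_, he⟩ => he.isCograph⟩
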